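/- Let A be an n×m matrix with entries in {0,...,p-1}, and let Y_1,...,Y_t be column transpositions such that c(A Y_1 ⋯ Y_t) < c(A Y_1 ⋯ Y_{t-1}) < ⋯ < c(A Y_1) < c(A) lexicographically. Then r(A Y_1 ⋯ Y_t) < r(A) lexicographically. -/

import Mathlib

def rowCode (p n m : ℕ) (A : Fin n → Fin m → Fin p) : Fin n → ℕ :=
  fun i => ∑ j : Fin m, (A i j : ℕ) * p ^ (m - 1 - (j : ℕ))

def colCode (p n m : ℕ) (A : Fin n → Fin m → Fin p) : Fin m → ℕ :=
  fun j => ∑ i : Fin n, (A i j : ℕ) * p ^ (n - 1 - (i : ℕ))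

def MatEquiv (p n m : ℕ) (A B : Fin n → Fin m → Fin p) : Prop :=
  ∃ (σ : Equiv.Perm (Fin n)) (τ : Equiv.Perm (Fin m)), ∀ i j, A i j = B (σ i) (τ j)

def Canonical (p n m : ℕ) (A : Fin n → Fin m → Fin p) : Prop :=
  ∀ B : Fin n → Fin m → Fin p, MatEquiv p n m B A →
    toLex (rowCode p n m A) ≤ toLex (rowCode p n m B)

def SemiCanonical (p n m : ℕ) (A : Fin n → Fin m → Fin p) : Prop :=
  Monotone (rowCode p n m A) ∧ Monotone (colCode p n m A)

/-!
Read as a base-`p` numeral (most significant digit first), the numeric order of digit vectors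
is their lexicographic order. For columns `u < v`, swapping them lowers `c` exactly when column
`v` is lexicographically below column `u`. Rows above the first row where the two columns differ
are unchanged by the swap, and in that row the smaller digit moves to the more significant
position `u`, so `r` drops strictly. Hence `r` decreases strictly along the whole chain.
-/

def digitValue {n p : ℕ} (a : Fin n → Fin p) : ℕ :=
  ∑ i, (a i : ℕ) * p ^ (n - 1 - (i : ℕ))

section Digits

variable {n p : ℕ}

theorem digitValue_succ (a : Fin (n + 1) → Fin p) :
    digitValue a = a 0 * p ^ n + digitValue (Fin.tail a) := by
  simp only [digitValue, Fin.sum_univ_succ, Fin.val_zero, Fin.val_succ, Fin.tail]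
  congr 1
  refine Finset.sum_congr rfl fun i _ => ?_
  congr 2
  omega

theorem digitValue_lt_pow (a : Fin n → Fin p) : digitValue a < p ^ n := by
  induction n with
  | zero => simp [digitValue]
  | succ n ih =>
    have htail := ih (Fin.tail a)
    have hlead : (a 0 : ℕ) + 1 ≤ p := (a 0).isLt
    rw [digitValue_succ, pow_succ']
    nlinarith

theorem digitValue_lt_of_toLex_lt {a b : Fin n → Fin p} (h : toLex a < toLex b) :
    digitValue a < digitValue b := by
  induction n with
  | zero => exact absurd h (congrArg toLex (Subsingleton.elim a b)).not_lt
  | succ n ih =>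
    obtain ⟨i, hpre, hi⟩ := h
    rw [digitValue_succ, digitValue_succ]
    induction i using Fin.cases with
    | zero =>
      have hlead : (a 0 : ℕ) + 1 ≤ b 0 := hi
      have htail := digitValue_lt_pow (Fin.tail a)
      nlinarith
    | succ k =>
      have hlead : a 0 = b 0 := hpre 0 (Fin.succ_pos k)
      have htail : toLex (Fin.tail a) < toLex (Fin.tail b) :=
        ⟨k, fun j hj => hpre j.succ (Fin.succ_lt_succ_iff.2 hj), hi⟩
      rw [hlead]
      exact Nat.add_lt_add_left (ih htail) _

theorem digitValue_lt_digitValue_iff {a b : Fin n → Fin p} :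
    digitValue a < digitValue b ↔ toLex a < toLex b :=
  (show StrictMono fun a : Lex (Fin n → Fin p) => digitValue (ofLex a) from
    fun _ _ => digitValue_lt_of_toLex_lt).lt_iff_lt

end Digits

section Swap

variable {ι α : Type*} [DecidableEq ι]

theorem comp_swap_eq_self {f : ι → α} {i j : ι} (h : f i = f j) : f ∘ Equiv.swap i j = f := by
  rw [Equiv.comp_swap_eq_update, h, Function.update_eq_self, ← h, Function.update_eq_self]

theorem toLex_comp_swap_lt_iff [LinearOrder ι] [LinearOrder α] {f : ι → α} {i j : ι}
    (hij : i < j) :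
    toLex (f ∘ Equiv.swap i j) < toLex f ↔ f j < f i := by
  refine ⟨fun h => lt_of_not_ge fun hle => ?_, Pi.lex_desc hij.le⟩
  rcases hle.lt_or_eq with hlt | heq
  · have hback := Pi.lex_desc (f := f ∘ Equiv.swap i j) hij.le (by simpa using hlt)
    rw [show (f ∘ Equiv.swap i j) ∘ Equiv.swap i j = f from
      funext fun k => congrArg f (Equiv.swap_apply_self i j k)] at hback
    exact lt_asymm h hback
  · rw [comp_swap_eq_self heq] at h
    exact lt_irrefl _ h

end Swap

section Matrix

variable {p n m : ℕ}

theorem rowCode_swap_lt_of_colCode_swap_lt (C : Fin n → Fin m → Fin p) {u v : Fin m}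
    (huv : u ≠ v)
    (hcol : toLex (colCode p n m fun i j => C i (Equiv.swap u v j)) < toLex (colCode p n m C)) :
    toLex (rowCode p n m fun i j => C i (Equiv.swap u v j)) < toLex (rowCode p n m C) := by
  -- `rowCode C i` and `colCode C j` are definitionally `digitValue` of row `i` and column `j`.
  wlog hlt : u < v generalizing u v
  · rw [Equiv.swap_comm] at hcol ⊢
    exact this huv.symm hcol (huv.lt_or_gt.resolve_left hlt)
  have hcodes : colCode p n m C v < colCode p n m C u :=
    (toLex_comp_swap_lt_iff (f := colCode p n m C) hlt).1 hcol
  obtain ⟨i₀, hsame, hfirst⟩ :=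
    (digitValue_lt_digitValue_iff (a := fun i => C i v) (b := fun i => C i u)).1 hcodes
  refine ⟨i₀, fun i hi => ?_, ?_⟩
  · exact congrArg digitValue (comp_swap_eq_self (f := C i) (hsame i hi).symm)
  · exact digitValue_lt_digitValue_iff.2 ((toLex_comp_swap_lt_iff (f := C i₀) hlt).2 hfirst)

end Matrix

theorem stmt6_general (p n m t : ℕ) (ht : 1 ≤ t)
    (A : Fin n → Fin m → Fin p)
    (B : Fin (t + 1) → Fin n → Fin m → Fin p)
    (hB0 : B 0 = A)
    (hstep : ∀ k : Fin t, ∃ u v : Fin m, u ≠ v ∧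
      B k.succ = fun i j => B k.castSucc i (Equiv.swap u v j))
    (hlt : ∀ k : Fin t,
      toLex (colCode p n m (B k.succ)) < toLex (colCode p n m (B k.castSucc))) :
    toLex (rowCode p n m (B (Fin.last t))) < toLex (rowCode p n m A) := by
  have hrows : StrictAnti fun k => toLex (rowCode p n m (B k)) := by
    refine Fin.strictAnti_iff_succ_lt.2 fun k => ?_
    obtain ⟨u, v, huv, hBk⟩ := hstep k
    have hcol := hlt k
    rw [hBk] at hcol ⊢
    exact rowCode_swap_lt_of_colCode_swap_lt _ huv hcol
  rw [← hB0]
  exact hrows (Fin.lt_def.2 ht)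

/-- if a chain of column transpositions strictly decreases `c` at
each step, then `r` of the final matrix is lexicographically smaller than `r(A)`. -/
theorem stmt6 (p n m t : ℕ) (hp : 2 ≤ p) (ht : 1 ≤ t)
    (A : Fin n → Fin m → Fin p)
    (B : Fin (t + 1) → Fin n → Fin m → Fin p)
    (hB0 : B 0 = A)
    (hstep : ∀ k : Fin t, ∃ u v : Fin m, u ≠ v ∧
      B k.succ = fun i j => B k.castSucc i (Equiv.swap u v j))
    (hlt : ∀ k : Fin t,
      toLex (colCode p n m (B k.succ)) < toLex (colCode p n m (B k.castSucc))) :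
    toLex (rowCode p n m (B (Fin.last t))) < toLex (rowCode p n m A) :=
  stmt6_general p n m t ht A B hB0 hstep hlt
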